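/- (Exogeneity statistics under the alternative.) Under the rank condition, suppose y = Yβ + X₁γ + V·a + σ·ε for some β ∈ ℝ^G, γ ∈ ℝ^{k₁}, a ∈ ℝ^G, a T×G real matrix V, real σ ≠ 0, and ε ∈ ℝ^T. Set ā := a/σ and u(ā) := V·ā + ε. Then C₁y = σ·C₁u(ā), yᵀΨ₀y = σ²·u(ā)ᵀΨ₀u(ā), yᵀΛ_ly = σ²·u(ā)ᵀΛ_lu(ā) for l = 1, 2, 3, 4, yᵀΨ_Ry = σ²·u(ā)ᵀΨ_Ru(ā), and yᵀΛ_Ry = σ²·u(ā)ᵀΛ_Ru(ā); consequently, whenever the relevant denominator is nonzero, each ratio κ_l·(yᵀΨ₀y)/(yᵀΛ_ly) equals κ_l·(u(ā)ᵀΨ₀u(ā))/(u(ā)ᵀΛ_lu(ā)), and similarly for the Revankar–Hartley ratio κ_R·(yᵀΨ_Ry)/(yᵀΛ_Ry), so the exogeneity statistics depend on (β, γ, a, σ, ε) only through u(ā). -/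

import Mathlib

open Matrix

variable {T G k₁ k₂ : ℕ}

/-- Orthogonal projection `P̄[A] = A(AᵀA)⁻¹Aᵀ` onto the column space of `A`. -/
noncomputable def projM {n : Type*} [Fintype n] [DecidableEq n]
    (A : Matrix (Fin T) n ℝ) : Matrix (Fin T) (Fin T) ℝ :=
  A * (Aᵀ * A)⁻¹ * Aᵀ

/-- The annihilator `M̄[A] = I - P̄[A]`. -/
noncomputable def annM {n : Type*} [Fintype n] [DecidableEq n]
    (A : Matrix (Fin T) n ℝ) : Matrix (Fin T) (Fin T) ℝ :=
  1 - projM A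

noncomputable def M1 (X₁ : Matrix (Fin T) (Fin k₁) ℝ) : Matrix (Fin T) (Fin T) ℝ :=
  annM X₁

noncomputable def Pm (X₁ : Matrix (Fin T) (Fin k₁) ℝ) (X₂ : Matrix (Fin T) (Fin k₂) ℝ) :
    Matrix (Fin T) (Fin T) ℝ :=
  projM (fromCols X₁ X₂)

noncomputable def Mm (X₁ : Matrix (Fin T) (Fin k₁) ℝ) (X₂ : Matrix (Fin T) (Fin k₂) ℝ) :
    Matrix (Fin T) (Fin T) ℝ :=
  annM (fromCols X₁ X₂)

noncomputable def N1 (X₁ : Matrix (Fin T) (Fin k₁) ℝ) (X₂ : Matrix (Fin T) (Fin k₂) ℝ) :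
    Matrix (Fin T) (Fin T) ℝ :=
  M1 X₁ * Pm X₁ X₂

noncomputable def B1 (Y : Matrix (Fin T) (Fin G) ℝ) (X₁ : Matrix (Fin T) (Fin k₁) ℝ) :
    Matrix (Fin G) (Fin T) ℝ :=
  (Yᵀ * M1 X₁ * Y)⁻¹ * (Yᵀ * M1 X₁)

noncomputable def B2 (Y : Matrix (Fin T) (Fin G) ℝ) (X₁ : Matrix (Fin T) (Fin k₁) ℝ)
    (X₂ : Matrix (Fin T) (Fin k₂) ℝ) : Matrix (Fin G) (Fin T) ℝ :=
  (Yᵀ * N1 X₁ X₂ * Y)⁻¹ * (Yᵀ * N1 X₁ X₂)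

noncomputable def C1 (Y : Matrix (Fin T) (Fin G) ℝ) (X₁ : Matrix (Fin T) (Fin k₁) ℝ)
    (X₂ : Matrix (Fin T) (Fin k₂) ℝ) : Matrix (Fin G) (Fin T) ℝ :=
  B2 Y X₁ X₂ - B1 Y X₁

/-- OLS estimator `β̂`. -/
noncomputable def betaOLS (y : Fin T → ℝ) (Y : Matrix (Fin T) (Fin G) ℝ)
    (X₁ : Matrix (Fin T) (Fin k₁) ℝ) : Fin G → ℝ :=
  B1 Y X₁ *ᵥ y

/-- 2SLS estimator `β̃`. -/
noncomputable def beta2S (y : Fin T → ℝ) (Y : Matrix (Fin T) (Fin G) ℝ)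
    (X₁ : Matrix (Fin T) (Fin k₁) ℝ) (X₂ : Matrix (Fin T) (Fin k₂) ℝ) : Fin G → ℝ :=
  B2 Y X₁ X₂ *ᵥ y

noncomputable def OmIV (Y : Matrix (Fin T) (Fin G) ℝ) (X₁ : Matrix (Fin T) (Fin k₁) ℝ)
    (X₂ : Matrix (Fin T) (Fin k₂) ℝ) : Matrix (Fin G) (Fin G) ℝ :=
  (T : ℝ)⁻¹ • (Yᵀ * N1 X₁ X₂ * Y)

noncomputable def OmLS (Y : Matrix (Fin T) (Fin G) ℝ) (X₁ : Matrix (Fin T) (Fin k₁) ℝ) :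
    Matrix (Fin G) (Fin G) ℝ :=
  (T : ℝ)⁻¹ • (Yᵀ * M1 X₁ * Y)

noncomputable def SigV (Y : Matrix (Fin T) (Fin G) ℝ) (X₁ : Matrix (Fin T) (Fin k₁) ℝ)
    (X₂ : Matrix (Fin T) (Fin k₂) ℝ) : Matrix (Fin G) (Fin G) ℝ :=
  (T : ℝ)⁻¹ • (Yᵀ * Mm X₁ X₂ * Y)

noncomputable def Dhat (Y : Matrix (Fin T) (Fin G) ℝ) (X₁ : Matrix (Fin T) (Fin k₁) ℝ)
    (X₂ : Matrix (Fin T) (Fin k₂) ℝ) : Matrix (Fin G) (Fin G) ℝ :=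
  (OmIV Y X₁ X₂)⁻¹ - (OmLS Y X₁)⁻¹

noncomputable def Psi0 (Y : Matrix (Fin T) (Fin G) ℝ) (X₁ : Matrix (Fin T) (Fin k₁) ℝ)
    (X₂ : Matrix (Fin T) (Fin k₂) ℝ) : Matrix (Fin T) (Fin T) ℝ :=
  (C1 Y X₁ X₂)ᵀ * (Dhat Y X₁ X₂)⁻¹ * C1 Y X₁ X₂

noncomputable def N2 (Y : Matrix (Fin T) (Fin G) ℝ) (X₁ : Matrix (Fin T) (Fin k₁) ℝ)
    (X₂ : Matrix (Fin T) (Fin k₂) ℝ) : Matrix (Fin T) (Fin T) ℝ :=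
  1 - M1 X₁ * Y * B2 Y X₁ X₂

noncomputable def Lam1 (Y : Matrix (Fin T) (Fin G) ℝ) (X₁ : Matrix (Fin T) (Fin k₁) ℝ)
    (X₂ : Matrix (Fin T) (Fin k₂) ℝ) : Matrix (Fin T) (Fin T) ℝ :=
  (T : ℝ)⁻¹ • (N1 X₁ X₂ * annM (N1 X₁ X₂ * Y) * N1 X₁ X₂)

noncomputable def Lam2 (Y : Matrix (Fin T) (Fin G) ℝ) (X₁ : Matrix (Fin T) (Fin k₁) ℝ)
    (X₂ : Matrix (Fin T) (Fin k₂) ℝ) : Matrix (Fin T) (Fin T) ℝ :=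
  M1 X₁ * ((T : ℝ)⁻¹ • annM (M1 X₁ * Y) - Psi0 Y X₁ X₂) * M1 X₁

noncomputable def Lam3 (Y : Matrix (Fin T) (Fin G) ℝ) (X₁ : Matrix (Fin T) (Fin k₁) ℝ)
    (X₂ : Matrix (Fin T) (Fin k₂) ℝ) : Matrix (Fin T) (Fin T) ℝ :=
  (T : ℝ)⁻¹ • (M1 X₁ * (N2 Y X₁ X₂)ᵀ * N2 Y X₁ X₂ * M1 X₁)

noncomputable def Lam4 (Y : Matrix (Fin T) (Fin G) ℝ) (X₁ : Matrix (Fin T) (Fin k₁) ℝ) :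
    Matrix (Fin T) (Fin T) ℝ :=
  (T : ℝ)⁻¹ • (M1 X₁ * annM (M1 X₁ * Y) * M1 X₁)

def Ybar (Y : Matrix (Fin T) (Fin G) ℝ) (X₁ : Matrix (Fin T) (Fin k₁) ℝ) :
    Matrix (Fin T) (Fin G ⊕ Fin k₁) ℝ :=
  fromCols Y X₁

def Zfull (Y : Matrix (Fin T) (Fin G) ℝ) (X₁ : Matrix (Fin T) (Fin k₁) ℝ)
    (X₂ : Matrix (Fin T) (Fin k₂) ℝ) : Matrix (Fin T) (Fin G ⊕ (Fin k₁ ⊕ Fin k₂)) ℝ :=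
  fromCols Y (fromCols X₁ X₂)

noncomputable def PsiR (Y : Matrix (Fin T) (Fin G) ℝ) (X₁ : Matrix (Fin T) (Fin k₁) ℝ)
    (X₂ : Matrix (Fin T) (Fin k₂) ℝ) : Matrix (Fin T) (Fin T) ℝ :=
  (T : ℝ)⁻¹ • (annM (Ybar Y X₁) - annM (Zfull Y X₁ X₂))

noncomputable def LamR (Y : Matrix (Fin T) (Fin G) ℝ) (X₁ : Matrix (Fin T) (Fin k₁) ℝ)
    (X₂ : Matrix (Fin T) (Fin k₂) ℝ) : Matrix (Fin T) (Fin T) ℝ :=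
  (T : ℝ)⁻¹ • annM (Zfull Y X₁ X₂)

/-- `σ̂² = (1/T)(y−Yβ̂)ᵀM₁(y−Yβ̂)`. -/
noncomputable def sigHat2 (y : Fin T → ℝ) (Y : Matrix (Fin T) (Fin G) ℝ)
    (X₁ : Matrix (Fin T) (Fin k₁) ℝ) : ℝ :=
  (T : ℝ)⁻¹ * ((y - Y *ᵥ betaOLS y Y X₁) ⬝ᵥ (M1 X₁ *ᵥ (y - Y *ᵥ betaOLS y Y X₁)))

/-- `σ̃² = (1/T)(y−Yβ̃)ᵀM₁(y−Yβ̃)`. -/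
noncomputable def sigTil2 (y : Fin T → ℝ) (Y : Matrix (Fin T) (Fin G) ℝ)
    (X₁ : Matrix (Fin T) (Fin k₁) ℝ) (X₂ : Matrix (Fin T) (Fin k₂) ℝ) : ℝ :=
  (T : ℝ)⁻¹ * ((y - Y *ᵥ beta2S y Y X₁ X₂) ⬝ᵥ (M1 X₁ *ᵥ (y - Y *ᵥ beta2S y Y X₁ X₂)))

/-- `σ̃₁² = (1/T)(y−Yβ̃)ᵀN₁(y−Yβ̃)`. -/
noncomputable def sigTil1sq (y : Fin T → ℝ) (Y : Matrix (Fin T) (Fin G) ℝ)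
    (X₁ : Matrix (Fin T) (Fin k₁) ℝ) (X₂ : Matrix (Fin T) (Fin k₂) ℝ) : ℝ :=
  (T : ℝ)⁻¹ * ((y - Y *ᵥ beta2S y Y X₁ X₂) ⬝ᵥ (N1 X₁ X₂ *ᵥ (y - Y *ᵥ beta2S y Y X₁ X₂)))

/-- `σ̃₂² = σ̂² − (β̃−β̂)ᵀΔ̂⁻¹(β̃−β̂)`. -/
noncomputable def sigTil2sq (y : Fin T → ℝ) (Y : Matrix (Fin T) (Fin G) ℝ)
    (X₁ : Matrix (Fin T) (Fin k₁) ℝ) (X₂ : Matrix (Fin T) (Fin k₂) ℝ) : ℝ :=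
  sigHat2 y Y X₁ -
    (beta2S y Y X₁ X₂ - betaOLS y Y X₁) ⬝ᵥ
      ((Dhat Y X₁ X₂)⁻¹ *ᵥ (beta2S y Y X₁ X₂ - betaOLS y Y X₁))

/-- The rank condition: `X₁`, `X = [X₁, X₂]`, `[Y, X]` and `[P̄[X]Y, X₁]` all have
full column rank. -/
def RankCond (Y : Matrix (Fin T) (Fin G) ℝ) (X₁ : Matrix (Fin T) (Fin k₁) ℝ)
    (X₂ : Matrix (Fin T) (Fin k₂) ℝ) : Prop :=
  X₁.rank = k₁ ∧ (fromCols X₁ X₂).rank = k₁ + k₂ ∧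
    (fromCols Y (fromCols X₁ X₂)).rank = G + (k₁ + k₂) ∧
    (fromCols (Pm X₁ X₂ * Y) X₁).rank = G + k₁

/-!
Each of the matrices `C₁`, `Ψ₀`, `Λ₁, …, Λ₄`, `Ψ_R`, `Λ_R` annihilates `Ȳ = [Y, X₁]`, and all
but `C₁` are symmetric. Writing `y = Ȳ (β, γ) + σ u(ā)`, the `Ȳ`-part drops out of `C₁ y` and of
every quadratic form `yᵀ Q y`, which leaves `σ C₁ u(ā)` and `σ² u(ā)ᵀ Q u(ā)`; the ratios then
lose the common factor `σ² ≠ 0`. The rank condition supplies the invertible Gram matrices behind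
the annihilation identities: `P̄[A] A = A` needs `AᵀA` invertible, and `B₁ Y = B₂ Y = 1` need
`YᵀM₁Y` and `YᵀN₁Y` invertible, which comes from the injectivity of `M₁Y` and `N₁Y`.
-/

open Function

section Projection

variable {m n : Type*} [Fintype n] [DecidableEq n]

theorem projM_mul_self {A : Matrix (Fin T) n ℝ} (h : IsUnit (Aᵀ * A)) : projM A * A = A := by
  rw [projM, Matrix.mul_assoc, Matrix.mul_assoc,
    nonsing_inv_mul _ ((isUnit_iff_isUnit_det _).1 h), Matrix.mul_one]

theorem annM_mul_self {A : Matrix (Fin T) n ℝ} (h : IsUnit (Aᵀ * A)) : annM A * A = 0 := by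
  rw [annM, Matrix.sub_mul, Matrix.one_mul, projM_mul_self h, sub_self]

theorem projM_mul_projM {A : Matrix (Fin T) n ℝ} (h : IsUnit (Aᵀ * A)) :
    projM A * projM A = projM A := by
  nth_rewrite 2 [projM]
  rw [← Matrix.mul_assoc, ← Matrix.mul_assoc, projM_mul_self h, projM]

theorem isSymm_projM (A : Matrix (Fin T) n ℝ) : (projM A).IsSymm := by
  rw [IsSymm, projM, transpose_mul, transpose_mul, transpose_transpose, transpose_nonsing_inv,
    transpose_mul, transpose_transpose, Matrix.mul_assoc]

theorem isSymm_annM (A : Matrix (Fin T) n ℝ) : (annM A).IsSymm :=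
  isSymm_one.sub (isSymm_projM A)

theorem mul_annM_of_mul_eq_zero {Q : Matrix m (Fin T) ℝ} {A : Matrix (Fin T) n ℝ}
    (h : Q * A = 0) : Q * annM A = Q := by
  rw [annM, projM, Matrix.mul_sub, Matrix.mul_one, ← Matrix.mul_assoc, ← Matrix.mul_assoc, h,
    Matrix.zero_mul, Matrix.zero_mul, sub_zero]

theorem annM_mul_annM {A : Matrix (Fin T) n ℝ} (h : IsUnit (Aᵀ * A)) :
    annM A * annM A = annM A :=
  mul_annM_of_mul_eq_zero (annM_mul_self h)

end Projection

section FullColumnRank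

variable {l m n p : Type*} [Fintype n]

theorem mulVec_injective_of_forall_mulVec_eq_zero {M : Matrix m n ℝ}
    (h : ∀ c, M *ᵥ c = 0 → c = 0) : Injective M.mulVec :=
  fun c d hcd => sub_eq_zero.1 (h _ (by rw [mulVec_sub, hcd, sub_self]))

theorem mulVec_injective_of_rank_eq {M : Matrix m n ℝ} (h : M.rank = Fintype.card n) :
    Injective M.mulVec := by
  rw [mulVec_injective_iff, linearIndependent_iff_card_eq_finrank_span, ← h,
    rank_eq_finrank_span_cols, Set.finrank]

theorem isUnit_transpose_mul_self_of_injective [Fintype m] [DecidableEq n] {A : Matrix m n ℝ}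
    (h : Injective A.mulVec) : IsUnit (Aᵀ * A) := by
  rw [← mulVec_injective_iff_isUnit]
  have hker : LinearMap.ker A.mulVecLin = ⊥ := LinearMap.ker_eq_bot.2 h
  exact LinearMap.ker_eq_bot.1 ((ker_mulVecLin_transpose_mul_self A).trans hker)

theorem isUnit_transpose_mul_mul_of_injective [Fintype m] [DecidableEq n]
    {S : Matrix m m ℝ} {B : Matrix m n ℝ} (hS : S.IsSymm) (hSS : S * S = S)
    (h : Injective (S * B).mulVec) : IsUnit (Bᵀ * S * B) := by
  have hgram : (S * B)ᵀ * (S * B) = Bᵀ * S * B := by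
    rw [transpose_mul, hS.eq, Matrix.mul_assoc, ← Matrix.mul_assoc S, hSS, Matrix.mul_assoc]
  exact hgram ▸ isUnit_transpose_mul_self_of_injective h

theorem mulVec_injective_fromCols_of_fromCols [Fintype l] [Fintype p] {A : Matrix m n ℝ}
    {B : Matrix m l ℝ} {C : Matrix m p ℝ} (h : Injective (fromCols A (fromCols B C)).mulVec) :
    Injective (fromCols A B).mulVec := by
  rw [mulVec_injective_iff] at h ⊢
  convert h.comp (Sum.map id Sum.inl) (Sum.map_injective.2 ⟨injective_id, Sum.inl_injective⟩)
    using 1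
  ext j i
  cases j <;> rfl

theorem mulVec_injective_annM_mul [Fintype p] [DecidableEq n] {A : Matrix (Fin T) n ℝ}
    {B : Matrix (Fin T) p ℝ} (h : Injective (fromCols B A).mulVec) :
    Injective (annM A * B).mulVec := by
  refine mulVec_injective_of_forall_mulVec_eq_zero fun c hc => ?_
  set d := (Aᵀ * A)⁻¹ *ᵥ (Aᵀ *ᵥ (B *ᵥ c))
  have hBc : B *ᵥ c = A *ᵥ d := by
    rw [← mulVec_mulVec, annM, sub_mulVec, one_mulVec, sub_eq_zero, projM] at hc
    rw [hc]
    simp only [d, mulVec_mulVec, Matrix.mul_assoc]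
  have hker : fromCols B A *ᵥ Sum.elim c (-d) = fromCols B A *ᵥ 0 := by
    rw [fromCols_mulVec_sumElim, mulVec_neg, hBc, add_neg_cancel, mulVec_zero]
  funext i
  exact congrFun (h hker) (Sum.inl i)

end FullColumnRank

section AnnihilatingMatrices

variable {l m n p : Type*} [Fintype l]

theorem mul_fromCols_eq_zero_iff {Q : Matrix m l ℝ} {A : Matrix l n ℝ} {B : Matrix l p ℝ} :
    Q * fromCols A B = 0 ↔ Q * A = 0 ∧ Q * B = 0 := by
  rw [mul_fromCols, ← fromCols_zero, fromCols_ext_iff]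

theorem inv_mul_mul_fromCols [Fintype n] [DecidableEq n] {S : Matrix l l ℝ} {Y : Matrix l n ℝ}
    {X : Matrix l p ℝ} (hSX : S * X = 0) (hu : IsUnit (Yᵀ * S * Y)) :
    (Yᵀ * S * Y)⁻¹ * (Yᵀ * S) * fromCols Y X = fromCols 1 0 := by
  have hY : (Yᵀ * S * Y)⁻¹ * (Yᵀ * S) * Y = 1 := by
    rw [Matrix.mul_assoc, nonsing_inv_mul _ ((isUnit_iff_isUnit_det _).1 hu)]
  have hX : (Yᵀ * S * Y)⁻¹ * (Yᵀ * S) * X = 0 := by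
    rw [Matrix.mul_assoc, Matrix.mul_assoc Yᵀ S X, hSX, Matrix.mul_zero, Matrix.mul_zero]
  rw [mul_fromCols, hY, hX]

theorem mul_mul_mul_fromCols_eq_zero {B S A : Matrix l l ℝ} {Y : Matrix l n ℝ}
    {X : Matrix l p ℝ} (hA : A * X = 0) (hS : S * (A * Y) = 0) :
    B * S * A * fromCols Y X = 0 := by
  rw [Matrix.mul_assoc, mul_fromCols, hA, Matrix.mul_assoc, mul_fromCols, hS, Matrix.mul_zero,
    fromCols_zero, Matrix.mul_zero]

theorem isSymm_transpose_mul_mul {D : Matrix l l ℝ} (C : Matrix l m ℝ) (hD : D.IsSymm) :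
    (Cᵀ * D * C).IsSymm := by
  rw [IsSymm, transpose_mul, transpose_mul, transpose_transpose, hD.eq, Matrix.mul_assoc]

theorem mulVec_eq_smul_of_mul_eq_zero [Fintype n] {Q : Matrix m l ℝ} {W : Matrix l n ℝ}
    (hQ : Q * W = 0) {y u : l → ℝ} {b : n → ℝ} {σ : ℝ} (hy : y = W *ᵥ b + σ • u) :
    Q *ᵥ y = σ • (Q *ᵥ u) := by
  rw [hy, mulVec_add, mulVec_mulVec, hQ, zero_mulVec, zero_add, mulVec_smul]

theorem dotProduct_mulVec_eq_sq_mul [Fintype n] {Q : Matrix l l ℝ} {W : Matrix l n ℝ}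
    (hQs : Q.IsSymm) (hQ : Q * W = 0) {y u : l → ℝ} {b : n → ℝ} {σ : ℝ}
    (hy : y = W *ᵥ b + σ • u) : y ⬝ᵥ (Q *ᵥ y) = σ ^ 2 * (u ⬝ᵥ (Q *ᵥ u)) := by
  have hQy := mulVec_eq_smul_of_mul_eq_zero hQ hy
  have hcomm : y ⬝ᵥ (Q *ᵥ u) = u ⬝ᵥ (Q *ᵥ y) := by
    rw [dotProduct_mulVec, ← mulVec_transpose, hQs.eq, dotProduct_comm]
  calc y ⬝ᵥ (Q *ᵥ y) = σ * (y ⬝ᵥ (Q *ᵥ u)) := by rw [hQy, dotProduct_smul, smul_eq_mul]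
    _ = σ * (u ⬝ᵥ (Q *ᵥ y)) := by rw [hcomm]
    _ = σ ^ 2 * (u ⬝ᵥ (Q *ᵥ u)) := by rw [hQy, dotProduct_smul, smul_eq_mul]; ring

end AnnihilatingMatrices

section StatisticMatrices

theorem isSymm_M1 (X₁ : Matrix (Fin T) (Fin k₁) ℝ) : (M1 X₁).IsSymm :=
  isSymm_annM X₁

theorem isSymm_Lam3 (Y : Matrix (Fin T) (Fin G) ℝ) (X₁ : Matrix (Fin T) (Fin k₁) ℝ)
    (X₂ : Matrix (Fin T) (Fin k₂) ℝ) : (Lam3 Y X₁ X₂).IsSymm := by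
  have hsym := isSymm_transpose_mul_self (N2 Y X₁ X₂ * M1 X₁)
  rw [transpose_mul, (isSymm_M1 X₁).eq, ← Matrix.mul_assoc] at hsym
  exact hsym.smul _

theorem isSymm_Lam4 (Y : Matrix (Fin T) (Fin G) ℝ) (X₁ : Matrix (Fin T) (Fin k₁) ℝ) :
    (Lam4 Y X₁).IsSymm := by
  have hsym := isSymm_transpose_mul_mul (M1 X₁) (isSymm_annM (M1 X₁ * Y))
  rw [(isSymm_M1 X₁).eq] at hsym
  exact hsym.smul _

theorem isSymm_PsiR (Y : Matrix (Fin T) (Fin G) ℝ) (X₁ : Matrix (Fin T) (Fin k₁) ℝ)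
    (X₂ : Matrix (Fin T) (Fin k₂) ℝ) : (PsiR Y X₁ X₂).IsSymm :=
  ((isSymm_annM _).sub (isSymm_annM _)).smul _

theorem isSymm_LamR (Y : Matrix (Fin T) (Fin G) ℝ) (X₁ : Matrix (Fin T) (Fin k₁) ℝ)
    (X₂ : Matrix (Fin T) (Fin k₂) ℝ) : (LamR Y X₁ X₂).IsSymm :=
  (isSymm_annM _).smul _

end StatisticMatrices

namespace RankCond

variable {Y : Matrix (Fin T) (Fin G) ℝ} {X₁ : Matrix (Fin T) (Fin k₁) ℝ}
  {X₂ : Matrix (Fin T) (Fin k₂) ℝ}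

theorem isUnit_gram_X₁ (h : RankCond Y X₁ X₂) : IsUnit (X₁ᵀ * X₁) :=
  isUnit_transpose_mul_self_of_injective (mulVec_injective_of_rank_eq (by simpa using h.1))

theorem isUnit_gram_X (h : RankCond Y X₁ X₂) :
    IsUnit ((fromCols X₁ X₂)ᵀ * fromCols X₁ X₂) :=
  isUnit_transpose_mul_self_of_injective (mulVec_injective_of_rank_eq (by simpa using h.2.1))

theorem injective_Zfull (h : RankCond Y X₁ X₂) : Injective (Zfull Y X₁ X₂).mulVec :=
  mulVec_injective_of_rank_eq (by simpa [Zfull] using h.2.2.1)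

theorem injective_Ybar (h : RankCond Y X₁ X₂) : Injective (Ybar Y X₁).mulVec :=
  mulVec_injective_fromCols_of_fromCols h.injective_Zfull

theorem M1_mul_X₁ (h : RankCond Y X₁ X₂) : M1 X₁ * X₁ = 0 :=
  annM_mul_self h.isUnit_gram_X₁

theorem Pm_mul_X₁ (h : RankCond Y X₁ X₂) : Pm X₁ X₂ * X₁ = X₁ := by
  have hP := projM_mul_self h.isUnit_gram_X
  rw [mul_fromCols, fromCols_ext_iff] at hP
  exact hP.1

theorem N1_eq_sub (h : RankCond Y X₁ X₂) : N1 X₁ X₂ = Pm X₁ X₂ - projM X₁ := by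
  have hPs : (Pm X₁ X₂)ᵀ = Pm X₁ X₂ := isSymm_projM _
  have hXP : X₁ᵀ * Pm X₁ X₂ = X₁ᵀ := by rw [← hPs, ← transpose_mul, h.Pm_mul_X₁]
  rw [N1, M1, annM, Matrix.sub_mul, Matrix.one_mul, projM, Matrix.mul_assoc _ X₁ᵀ, hXP]

theorem isSymm_N1 (h : RankCond Y X₁ X₂) : (N1 X₁ X₂).IsSymm := by
  rw [h.N1_eq_sub]
  exact (isSymm_projM _).sub (isSymm_projM _)

theorem N1_mul_X₁ (h : RankCond Y X₁ X₂) : N1 X₁ X₂ * X₁ = 0 := by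
  rw [N1, Matrix.mul_assoc, h.Pm_mul_X₁, h.M1_mul_X₁]

theorem N1_mul_M1 (h : RankCond Y X₁ X₂) : N1 X₁ X₂ * M1 X₁ = N1 X₁ X₂ :=
  mul_annM_of_mul_eq_zero h.N1_mul_X₁

theorem N1_mul_N1 (h : RankCond Y X₁ X₂) : N1 X₁ X₂ * N1 X₁ X₂ = N1 X₁ X₂ := by
  calc N1 X₁ X₂ * N1 X₁ X₂ = N1 X₁ X₂ * M1 X₁ * Pm X₁ X₂ := by rw [Matrix.mul_assoc]; rfl
    _ = M1 X₁ * (Pm X₁ X₂ * Pm X₁ X₂) := by rw [h.N1_mul_M1, N1, Matrix.mul_assoc]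
    _ = N1 X₁ X₂ := by rw [Pm, projM_mul_projM h.isUnit_gram_X]; rfl

theorem injective_M1_mul_Y (h : RankCond Y X₁ X₂) : Injective (M1 X₁ * Y).mulVec :=
  mulVec_injective_annM_mul h.injective_Ybar

theorem injective_N1_mul_Y (h : RankCond Y X₁ X₂) : Injective (N1 X₁ X₂ * Y).mulVec := by
  rw [N1, Matrix.mul_assoc]
  exact mulVec_injective_annM_mul (mulVec_injective_of_rank_eq (by simpa using h.2.2.2))

theorem isUnit_YtM1Y (h : RankCond Y X₁ X₂) : IsUnit (Yᵀ * M1 X₁ * Y) :=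
  isUnit_transpose_mul_mul_of_injective (isSymm_annM X₁) (annM_mul_annM h.isUnit_gram_X₁)
    h.injective_M1_mul_Y

theorem isUnit_YtN1Y (h : RankCond Y X₁ X₂) : IsUnit (Yᵀ * N1 X₁ X₂ * Y) :=
  isUnit_transpose_mul_mul_of_injective h.isSymm_N1 h.N1_mul_N1 h.injective_N1_mul_Y

theorem B1_mul_Ybar (h : RankCond Y X₁ X₂) : B1 Y X₁ * Ybar Y X₁ = fromCols 1 0 :=
  inv_mul_mul_fromCols h.M1_mul_X₁ h.isUnit_YtM1Y

theorem B2_mul_Ybar (h : RankCond Y X₁ X₂) : B2 Y X₁ X₂ * Ybar Y X₁ = fromCols 1 0 :=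
  inv_mul_mul_fromCols h.N1_mul_X₁ h.isUnit_YtN1Y

theorem C1_mul_Ybar (h : RankCond Y X₁ X₂) : C1 Y X₁ X₂ * Ybar Y X₁ = 0 := by
  rw [C1, Matrix.sub_mul, h.B1_mul_Ybar, h.B2_mul_Ybar, sub_self]

theorem isSymm_Psi0 (h : RankCond Y X₁ X₂) : (Psi0 Y X₁ X₂).IsSymm := by
  have hIV : (OmIV Y X₁ X₂).IsSymm := (isSymm_transpose_mul_mul Y h.isSymm_N1).smul _
  have hLS : (OmLS Y X₁).IsSymm := (isSymm_transpose_mul_mul Y (isSymm_annM X₁)).smul _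
  exact isSymm_transpose_mul_mul _ (hIV.inv.sub hLS.inv).inv

theorem Psi0_mul_Ybar (h : RankCond Y X₁ X₂) : Psi0 Y X₁ X₂ * Ybar Y X₁ = 0 := by
  rw [Psi0, Matrix.mul_assoc, h.C1_mul_Ybar, Matrix.mul_zero]

theorem isSymm_Lam1 (h : RankCond Y X₁ X₂) : (Lam1 Y X₁ X₂).IsSymm := by
  have hsym := isSymm_transpose_mul_mul (N1 X₁ X₂) (isSymm_annM (N1 X₁ X₂ * Y))
  rw [h.isSymm_N1.eq] at hsym
  exact hsym.smul _

theorem Lam1_mul_Ybar (h : RankCond Y X₁ X₂) : Lam1 Y X₁ X₂ * Ybar Y X₁ = 0 := by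
  rw [Lam1, Matrix.smul_mul, Ybar, mul_mul_mul_fromCols_eq_zero h.N1_mul_X₁
    (annM_mul_self (isUnit_transpose_mul_self_of_injective h.injective_N1_mul_Y)), smul_zero]

theorem isSymm_Lam2 (h : RankCond Y X₁ X₂) : (Lam2 Y X₁ X₂).IsSymm := by
  have hsym := isSymm_transpose_mul_mul (M1 X₁)
    (((isSymm_annM (M1 X₁ * Y)).smul (T : ℝ)⁻¹).sub h.isSymm_Psi0)
  rwa [(isSymm_M1 X₁).eq] at hsym

theorem Lam2_mul_Ybar (h : RankCond Y X₁ X₂) : Lam2 Y X₁ X₂ * Ybar Y X₁ = 0 := by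
  obtain ⟨hPsi0Y, hPsi0X₁⟩ := mul_fromCols_eq_zero_iff.1 h.Psi0_mul_Ybar
  have hPsi0M1 : Psi0 Y X₁ X₂ * M1 X₁ = Psi0 Y X₁ X₂ := mul_annM_of_mul_eq_zero hPsi0X₁
  refine mul_mul_mul_fromCols_eq_zero h.M1_mul_X₁ ?_
  rw [Matrix.sub_mul, Matrix.smul_mul,
    annM_mul_self (isUnit_transpose_mul_self_of_injective h.injective_M1_mul_Y), smul_zero,
    ← Matrix.mul_assoc, hPsi0M1, hPsi0Y, sub_zero]

theorem Lam3_mul_Ybar (h : RankCond Y X₁ X₂) : Lam3 Y X₁ X₂ * Ybar Y X₁ = 0 := by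
  have hB2Y : B2 Y X₁ X₂ * Y = 1 := by
    have hB2 := h.B2_mul_Ybar
    rw [Ybar, mul_fromCols, fromCols_ext_iff] at hB2
    exact hB2.1
  have hB2M1 : B2 Y X₁ X₂ * M1 X₁ = B2 Y X₁ X₂ := by
    rw [B2, Matrix.mul_assoc _ (Yᵀ * N1 X₁ X₂), Matrix.mul_assoc Yᵀ (N1 X₁ X₂) (M1 X₁),
      h.N1_mul_M1]
  have hN2 : N2 Y X₁ X₂ * (M1 X₁ * Y) = 0 := by
    rw [N2, Matrix.sub_mul, Matrix.one_mul, Matrix.mul_assoc (M1 X₁ * Y),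
      ← Matrix.mul_assoc _ (M1 X₁), hB2M1, hB2Y, Matrix.mul_one, sub_self]
  rw [Lam3, Matrix.smul_mul, Ybar, mul_mul_mul_fromCols_eq_zero h.M1_mul_X₁ hN2, smul_zero]

theorem Lam4_mul_Ybar (h : RankCond Y X₁ X₂) : Lam4 Y X₁ * Ybar Y X₁ = 0 := by
  rw [Lam4, Matrix.smul_mul, Ybar, mul_mul_mul_fromCols_eq_zero h.M1_mul_X₁
    (annM_mul_self (isUnit_transpose_mul_self_of_injective h.injective_M1_mul_Y)), smul_zero]

theorem annM_Zfull_mul_Ybar (h : RankCond Y X₁ X₂) : annM (Zfull Y X₁ X₂) * Ybar Y X₁ = 0 := by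
  have hZ := annM_mul_self (isUnit_transpose_mul_self_of_injective h.injective_Zfull)
  rw [Zfull, mul_fromCols_eq_zero_iff, mul_fromCols_eq_zero_iff] at hZ
  exact mul_fromCols_eq_zero_iff.2 ⟨hZ.1, hZ.2.1⟩

theorem PsiR_mul_Ybar (h : RankCond Y X₁ X₂) : PsiR Y X₁ X₂ * Ybar Y X₁ = 0 := by
  rw [PsiR, Matrix.smul_mul, Matrix.sub_mul,
    annM_mul_self (isUnit_transpose_mul_self_of_injective h.injective_Ybar),
    h.annM_Zfull_mul_Ybar, sub_self, smul_zero]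

theorem LamR_mul_Ybar (h : RankCond Y X₁ X₂) : LamR Y X₁ X₂ * Ybar Y X₁ = 0 := by
  rw [LamR, Matrix.smul_mul, h.annM_Zfull_mul_Ybar, smul_zero]

end RankCond

theorem stmt17_general {T G k₁ k₂ : ℕ}
    (y : Fin T → ℝ) (Y : Matrix (Fin T) (Fin G) ℝ)
    (X₁ : Matrix (Fin T) (Fin k₁) ℝ) (X₂ : Matrix (Fin T) (Fin k₂) ℝ)
    (hrank : RankCond Y X₁ X₂)
    (β : Fin G → ℝ) (γ : Fin k₁ → ℝ) (a : Fin G → ℝ)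
    (V : Matrix (Fin T) (Fin G) ℝ) (σ : ℝ) (hσ : σ ≠ 0) (ε : Fin T → ℝ)
    (hy : y = Y *ᵥ β + X₁ *ᵥ γ + V *ᵥ a + σ • ε)
    (u : Fin T → ℝ) (hu : u = V *ᵥ (σ⁻¹ • a) + ε) :
    C1 Y X₁ X₂ *ᵥ y = σ • (C1 Y X₁ X₂ *ᵥ u) ∧
    y ⬝ᵥ (Psi0 Y X₁ X₂ *ᵥ y) = σ ^ 2 * (u ⬝ᵥ (Psi0 Y X₁ X₂ *ᵥ u)) ∧
    y ⬝ᵥ (Lam1 Y X₁ X₂ *ᵥ y) = σ ^ 2 * (u ⬝ᵥ (Lam1 Y X₁ X₂ *ᵥ u)) ∧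
    y ⬝ᵥ (Lam2 Y X₁ X₂ *ᵥ y) = σ ^ 2 * (u ⬝ᵥ (Lam2 Y X₁ X₂ *ᵥ u)) ∧
    y ⬝ᵥ (Lam3 Y X₁ X₂ *ᵥ y) = σ ^ 2 * (u ⬝ᵥ (Lam3 Y X₁ X₂ *ᵥ u)) ∧
    y ⬝ᵥ (Lam4 Y X₁ *ᵥ y) = σ ^ 2 * (u ⬝ᵥ (Lam4 Y X₁ *ᵥ u)) ∧
    y ⬝ᵥ (PsiR Y X₁ X₂ *ᵥ y) = σ ^ 2 * (u ⬝ᵥ (PsiR Y X₁ X₂ *ᵥ u)) ∧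
    y ⬝ᵥ (LamR Y X₁ X₂ *ᵥ y) = σ ^ 2 * (u ⬝ᵥ (LamR Y X₁ X₂ *ᵥ u)) ∧
    (y ⬝ᵥ (Lam1 Y X₁ X₂ *ᵥ y) ≠ 0 →
      ((k₂ : ℝ) - (G : ℝ)) / (G : ℝ) *
          (y ⬝ᵥ (Psi0 Y X₁ X₂ *ᵥ y) / (y ⬝ᵥ (Lam1 Y X₁ X₂ *ᵥ y)))
        = ((k₂ : ℝ) - (G : ℝ)) / (G : ℝ) *
            (u ⬝ᵥ (Psi0 Y X₁ X₂ *ᵥ u) / (u ⬝ᵥ (Lam1 Y X₁ X₂ *ᵥ u)))) ∧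
    (y ⬝ᵥ (Lam2 Y X₁ X₂ *ᵥ y) ≠ 0 →
      ((T : ℝ) - (k₁ : ℝ) - 2 * (G : ℝ)) / (G : ℝ) *
          (y ⬝ᵥ (Psi0 Y X₁ X₂ *ᵥ y) / (y ⬝ᵥ (Lam2 Y X₁ X₂ *ᵥ y)))
        = ((T : ℝ) - (k₁ : ℝ) - 2 * (G : ℝ)) / (G : ℝ) *
            (u ⬝ᵥ (Psi0 Y X₁ X₂ *ᵥ u) / (u ⬝ᵥ (Lam2 Y X₁ X₂ *ᵥ u)))) ∧
    (y ⬝ᵥ (Lam3 Y X₁ X₂ *ᵥ y) ≠ 0 →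
      ((T : ℝ) - (k₁ : ℝ) - (G : ℝ)) *
          (y ⬝ᵥ (Psi0 Y X₁ X₂ *ᵥ y) / (y ⬝ᵥ (Lam3 Y X₁ X₂ *ᵥ y)))
        = ((T : ℝ) - (k₁ : ℝ) - (G : ℝ)) *
            (u ⬝ᵥ (Psi0 Y X₁ X₂ *ᵥ u) / (u ⬝ᵥ (Lam3 Y X₁ X₂ *ᵥ u)))) ∧
    (y ⬝ᵥ (Lam4 Y X₁ *ᵥ y) ≠ 0 →
      ((T : ℝ) - (k₁ : ℝ) - (G : ℝ)) *
          (y ⬝ᵥ (Psi0 Y X₁ X₂ *ᵥ y) / (y ⬝ᵥ (Lam4 Y X₁ *ᵥ y)))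
        = ((T : ℝ) - (k₁ : ℝ) - (G : ℝ)) *
            (u ⬝ᵥ (Psi0 Y X₁ X₂ *ᵥ u) / (u ⬝ᵥ (Lam4 Y X₁ *ᵥ u)))) ∧
    (y ⬝ᵥ (LamR Y X₁ X₂ *ᵥ y) ≠ 0 →
      ((T : ℝ) - (k₁ : ℝ) - (k₂ : ℝ) - (G : ℝ)) / (k₂ : ℝ) *
          (y ⬝ᵥ (PsiR Y X₁ X₂ *ᵥ y) / (y ⬝ᵥ (LamR Y X₁ X₂ *ᵥ y)))
        = ((T : ℝ) - (k₁ : ℝ) - (k₂ : ℝ) - (G : ℝ)) / (k₂ : ℝ) *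
            (u ⬝ᵥ (PsiR Y X₁ X₂ *ᵥ u) / (u ⬝ᵥ (LamR Y X₁ X₂ *ᵥ u)))) := by
  have hy' : y = Ybar Y X₁ *ᵥ Sum.elim β γ + σ • u := by
    rw [Ybar, fromCols_mulVec_sumElim, hy, hu, mulVec_smul, smul_add, smul_smul,
      mul_inv_cancel₀ hσ, one_smul, add_assoc]
  have quad : ∀ Q : Matrix (Fin T) (Fin T) ℝ, Q.IsSymm → Q * Ybar Y X₁ = 0 →
      y ⬝ᵥ (Q *ᵥ y) = σ ^ 2 * (u ⬝ᵥ (Q *ᵥ u)) :=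
    fun _ hQ hQY => dotProduct_mulVec_eq_sq_mul hQ hQY hy'
  have ratio : ∀ {a b a' b' κ : ℝ}, a = σ ^ 2 * a' → b = σ ^ 2 * b' →
      κ * (a / b) = κ * (a' / b') := by
    intro a b a' b' κ ha hb
    rw [ha, hb, mul_div_mul_left _ _ (pow_ne_zero 2 hσ)]
  have q0 := quad _ hrank.isSymm_Psi0 hrank.Psi0_mul_Ybar
  have q1 := quad _ hrank.isSymm_Lam1 hrank.Lam1_mul_Ybar
  have q2 := quad _ hrank.isSymm_Lam2 hrank.Lam2_mul_Ybar
  have q3 := quad _ (isSymm_Lam3 Y X₁ X₂) hrank.Lam3_mul_Ybar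
  have q4 := quad _ (isSymm_Lam4 Y X₁) hrank.Lam4_mul_Ybar
  have qR := quad _ (isSymm_PsiR Y X₁ X₂) hrank.PsiR_mul_Ybar
  have qL := quad _ (isSymm_LamR Y X₁ X₂) hrank.LamR_mul_Ybar
  exact ⟨mulVec_eq_smul_of_mul_eq_zero hrank.C1_mul_Ybar hy', q0, q1, q2, q3, q4, qR, qL,
    fun _ => ratio q0 q1, fun _ => ratio q0 q2, fun _ => ratio q0 q3, fun _ => ratio q0 q4,
    fun _ => ratio qR qL⟩

/-- **Exogeneity statistics under the alternative.**  Under the rank condition, if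
`y = Yβ + X₁γ + Va + σε` with `σ ≠ 0`, set `ā = a/σ` and `u(ā) = Vā + ε`.  Then
`C₁y = σC₁u(ā)`, `yᵀΨ₀y = σ²u(ā)ᵀΨ₀u(ā)`, `yᵀΛ_ly = σ²u(ā)ᵀΛ_lu(ā)` (`l = 1,…,4`),
`yᵀΨ_Ry = σ²u(ā)ᵀΨ_Ru(ā)`, `yᵀΛ_Ry = σ²u(ā)ᵀΛ_Ru(ā)`; consequently the exogeneity
statistic ratios depend on `(β, γ, a, σ, ε)` only through `u(ā)`. -/
theorem stmt17 {T G k₁ k₂ : ℕ}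
    (hT : 0 < T) (hG : 0 < G) (hk₁ : 0 < k₁) (hk₂ : 0 < k₂)
    (y : Fin T → ℝ) (Y : Matrix (Fin T) (Fin G) ℝ)
    (X₁ : Matrix (Fin T) (Fin k₁) ℝ) (X₂ : Matrix (Fin T) (Fin k₂) ℝ)
    (hrank : RankCond Y X₁ X₂)
    (β : Fin G → ℝ) (γ : Fin k₁ → ℝ) (a : Fin G → ℝ)
    (V : Matrix (Fin T) (Fin G) ℝ) (σ : ℝ) (hσ : σ ≠ 0) (ε : Fin T → ℝ)
    (hy : y = Y *ᵥ β + X₁ *ᵥ γ + V *ᵥ a + σ • ε)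
    (u : Fin T → ℝ) (hu : u = V *ᵥ (σ⁻¹ • a) + ε) :
    C1 Y X₁ X₂ *ᵥ y = σ • (C1 Y X₁ X₂ *ᵥ u) ∧
    y ⬝ᵥ (Psi0 Y X₁ X₂ *ᵥ y) = σ ^ 2 * (u ⬝ᵥ (Psi0 Y X₁ X₂ *ᵥ u)) ∧
    y ⬝ᵥ (Lam1 Y X₁ X₂ *ᵥ y) = σ ^ 2 * (u ⬝ᵥ (Lam1 Y X₁ X₂ *ᵥ u)) ∧
    y ⬝ᵥ (Lam2 Y X₁ X₂ *ᵥ y) = σ ^ 2 * (u ⬝ᵥ (Lam2 Y X₁ X₂ *ᵥ u)) ∧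
    y ⬝ᵥ (Lam3 Y X₁ X₂ *ᵥ y) = σ ^ 2 * (u ⬝ᵥ (Lam3 Y X₁ X₂ *ᵥ u)) ∧
    y ⬝ᵥ (Lam4 Y X₁ *ᵥ y) = σ ^ 2 * (u ⬝ᵥ (Lam4 Y X₁ *ᵥ u)) ∧
    y ⬝ᵥ (PsiR Y X₁ X₂ *ᵥ y) = σ ^ 2 * (u ⬝ᵥ (PsiR Y X₁ X₂ *ᵥ u)) ∧
    y ⬝ᵥ (LamR Y X₁ X₂ *ᵥ y) = σ ^ 2 * (u ⬝ᵥ (LamR Y X₁ X₂ *ᵥ u)) ∧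
    (y ⬝ᵥ (Lam1 Y X₁ X₂ *ᵥ y) ≠ 0 →
      ((k₂ : ℝ) - (G : ℝ)) / (G : ℝ) *
          (y ⬝ᵥ (Psi0 Y X₁ X₂ *ᵥ y) / (y ⬝ᵥ (Lam1 Y X₁ X₂ *ᵥ y)))
        = ((k₂ : ℝ) - (G : ℝ)) / (G : ℝ) *
            (u ⬝ᵥ (Psi0 Y X₁ X₂ *ᵥ u) / (u ⬝ᵥ (Lam1 Y X₁ X₂ *ᵥ u)))) ∧
    (y ⬝ᵥ (Lam2 Y X₁ X₂ *ᵥ y) ≠ 0 →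
      ((T : ℝ) - (k₁ : ℝ) - 2 * (G : ℝ)) / (G : ℝ) *
          (y ⬝ᵥ (Psi0 Y X₁ X₂ *ᵥ y) / (y ⬝ᵥ (Lam2 Y X₁ X₂ *ᵥ y)))
        = ((T : ℝ) - (k₁ : ℝ) - 2 * (G : ℝ)) / (G : ℝ) *
            (u ⬝ᵥ (Psi0 Y X₁ X₂ *ᵥ u) / (u ⬝ᵥ (Lam2 Y X₁ X₂ *ᵥ u)))) ∧
    (y ⬝ᵥ (Lam3 Y X₁ X₂ *ᵥ y) ≠ 0 →
      ((T : ℝ) - (k₁ : ℝ) - (G : ℝ)) *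
          (y ⬝ᵥ (Psi0 Y X₁ X₂ *ᵥ y) / (y ⬝ᵥ (Lam3 Y X₁ X₂ *ᵥ y)))
        = ((T : ℝ) - (k₁ : ℝ) - (G : ℝ)) *
            (u ⬝ᵥ (Psi0 Y X₁ X₂ *ᵥ u) / (u ⬝ᵥ (Lam3 Y X₁ X₂ *ᵥ u)))) ∧
    (y ⬝ᵥ (Lam4 Y X₁ *ᵥ y) ≠ 0 →
      ((T : ℝ) - (k₁ : ℝ) - (G : ℝ)) *
          (y ⬝ᵥ (Psi0 Y X₁ X₂ *ᵥ y) / (y ⬝ᵥ (Lam4 Y X₁ *ᵥ y)))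
        = ((T : ℝ) - (k₁ : ℝ) - (G : ℝ)) *
            (u ⬝ᵥ (Psi0 Y X₁ X₂ *ᵥ u) / (u ⬝ᵥ (Lam4 Y X₁ *ᵥ u)))) ∧
    (y ⬝ᵥ (LamR Y X₁ X₂ *ᵥ y) ≠ 0 →
      ((T : ℝ) - (k₁ : ℝ) - (k₂ : ℝ) - (G : ℝ)) / (k₂ : ℝ) *
          (y ⬝ᵥ (PsiR Y X₁ X₂ *ᵥ y) / (y ⬝ᵥ (LamR Y X₁ X₂ *ᵥ y)))
        = ((T : ℝ) - (k₁ : ℝ) - (k₂ : ℝ) - (G : ℝ)) / (k₂ : ℝ) *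
            (u ⬝ᵥ (PsiR Y X₁ X₂ *ᵥ u) / (u ⬝ᵥ (LamR Y X₁ X₂ *ᵥ u)))) :=
  stmt17_general y Y X₁ X₂ hrank β γ a V σ hσ ε hy u hu
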